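/- arXiv:2201.08596 — 2 statements merged into one kernel-verified Lean document; each statement's English description precedes it below -/
import Mathlib

section
/- If f:X→X is an FDS with n components whose interaction graph has no cycle, then f^n is a constant function; in particular f has a unique fixed point. -/
open scoped Classical

/-- A signed digraph on vertex set `V`: for each ordered pair of vertices there may be
a positive arc and/or a negative arc. -/
structure SDigraph (V : Type) where
  pos : V → V → Bool
  neg : V → V → Bool

namespace SDigraph

variable {V : Type}

/-- There is an arc (of some sign) from `a` to `b` (the underlying unsigned digraph). -/
def arc (G : SDigraph V) (a b : V) : Prop := G.pos a b = true ∨ G.neg a b = true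

/-- Out-degree: positive and negative arcs are counted separately. -/
def outdeg [Fintype V] (G : SDigraph V) (i : V) : ℕ :=
  (Finset.univ.filter fun j => G.pos i j = true).card +
  (Finset.univ.filter fun j => G.neg i j = true).card

/-- In-degree: positive and negative arcs are counted separately. -/
def indeg [Fintype V] (G : SDigraph V) (i : V) : ℕ :=
  (Finset.univ.filter fun j => G.pos j i = true).card +
  (Finset.univ.filter fun j => G.neg j i = true).card

/-- The symmetrized adjacency relation (for weak connectivity). -/
def wconnRel (G : SDigraph V) (a b : V) : Prop := G.arc a b ∨ G.arc b a

/-- `G` is (weakly) connected. -/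
def Connected (G : SDigraph V) : Prop :=
  ∀ a b : V, Relation.ReflTransGen (wconnRel G) a b

/-- Directed reachability. -/
def Reach (G : SDigraph V) : V → V → Prop := Relation.ReflTransGen G.arc

/-- Out-degree in the underlying unsigned digraph. -/
noncomputable def underOutdeg [Fintype V] (G : SDigraph V) (i : V) : ℕ :=
  (Finset.univ.filter fun j => G.arc i j).card

/-- In-degree in the underlying unsigned digraph. -/
noncomputable def underIndeg [Fintype V] (G : SDigraph V) (i : V) : ℕ :=
  (Finset.univ.filter fun j => G.arc j i).card

/-- `G` is a signed cycle: the underlying digraph is a directed cycle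
(every vertex has exactly one out- and one in-neighbour and the graph is connected
and nonempty) and there are no parallel arcs. -/
def IsSignedCycleGraph [Fintype V] (G : SDigraph V) : Prop :=
  0 < Fintype.card V ∧ Connected G ∧
  (∀ a b : V, ¬(G.pos a b = true ∧ G.neg a b = true)) ∧
  (∀ i : V, underOutdeg G i = 1) ∧
  (∀ i : V, underIndeg G i = 1)

/-- `steps G m a b`: there is a directed walk of length `m` from `a` to `b`. -/
def steps (G : SDigraph V) : ℕ → V → V → Prop
  | 0 => fun a b => a = b
  | m + 1 => fun a b => ∃ c, G.arc a c ∧ steps G m c b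

/-- Directed distance from `a` to `b`, `⊤` if `b` is not reachable from `a`. -/
noncomputable def dist (G : SDigraph V) (a b : V) : ℕ∞ :=
  sInf {x : ℕ∞ | ∃ m : ℕ, steps G m a b ∧ x = (m : ℕ∞)}

/-- The strong component containing `a`, as a finite set of vertices. -/
noncomputable def scc [Fintype V] (G : SDigraph V) (a : V) : Finset V :=
  Finset.univ.filter fun b => Reach G a b ∧ Reach G b a

/-- The strong component of `a` is initial: no arc enters it from outside. -/
def Initial [Fintype V] (G : SDigraph V) (a : V) : Prop :=
  ∀ b c : V, b ∈ scc G a → G.arc c b → c ∈ scc G a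

/-- `λ(G) = max_i min_{initial strong component I} (d_G(I,i) + |I|)`. -/
noncomputable def lam [Fintype V] (G : SDigraph V) : ℕ∞ :=
  Finset.univ.sup fun i : V =>
    (Finset.univ.filter fun a : V => Initial G a).inf fun a =>
      (scc G a).inf (fun b => dist G b i) + ((scc G a).card : ℕ∞)

/-- `G` is basic: all its initial strong components are trivial
(a single vertex with no loop). -/
def Basic [Fintype V] (G : SDigraph V) : Prop :=
  ∀ a : V, Initial G a → (scc G a).card = 1 ∧ ¬ G.arc a a

/-- The (weakly) connected component containing `a`. -/
noncomputable def component [Fintype V] (G : SDigraph V) (a : V) : Finset V :=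
  Finset.univ.filter fun b => Relation.ReflTransGen (wconnRel G) a b

/-- The subgraph induced by a set `S` of vertices. -/
def induce (G : SDigraph V) (S : Finset V) : SDigraph {x : V // x ∈ S} :=
  ⟨fun a b => G.pos a.1 b.1, fun a b => G.neg a.1 b.1⟩

/-- `v` (with arc signs `s`) is a directed cycle of `G` on `m+1` distinct vertices:
for each `t` there is an arc of sign `s t` from `v t` to `v (t+1)` (cyclically). -/
def IsSignedCycleOn (G : SDigraph V) (m : ℕ)
    (v : Fin (m + 1) → V) (s : Fin (m + 1) → Bool) : Prop :=
  Function.Injective v ∧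
  ∀ t : Fin (m + 1),
    if s t then G.pos (v t) (v (t + 1)) = true else G.neg (v t) (v (t + 1)) = true

/-- `G` has a directed cycle (signs ignored). -/
def HasCycle (G : SDigraph V) : Prop :=
  ∃ (m : ℕ) (v : Fin (m + 1) → V), Function.Injective v ∧
    ∀ t : Fin (m + 1), G.arc (v t) (v (t + 1))

/-- Number of negative arcs in a sign pattern. -/
def negCount {m : ℕ} (s : Fin (m + 1) → Bool) : ℕ :=
  (Finset.univ.filter fun t => s t = false).card

/-- `G` has a positive cycle. -/
def HasPositiveCycle (G : SDigraph V) : Prop :=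
  ∃ (m : ℕ) (v : Fin (m + 1) → V) (s : Fin (m + 1) → Bool),
    IsSignedCycleOn G m v s ∧ negCount s % 2 = 0

/-- `G` has a negative cycle. -/
def HasNegativeCycle (G : SDigraph V) : Prop :=
  ∃ (m : ℕ) (v : Fin (m + 1) → V) (s : Fin (m + 1) → Bool),
    IsSignedCycleOn G m v s ∧ negCount s % 2 = 1

end SDigraph

/-- A finite dynamical system with components indexed by `V`: each `X i` is a
nonempty finite interval of integers and `f` maps `X = ∏ X i` into itself. -/
structure FDS (V : Type) where
  X : V → Finset ℤ
  nonempty : ∀ i, (X i).Nonempty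
  interval : ∀ i, ∀ a ∈ X i, ∀ b ∈ X i, ∀ c : ℤ, a ≤ c → c ≤ b → c ∈ X i
  f : (V → ℤ) → V → ℤ
  maps : ∀ x, (∀ i, x i ∈ X i) → ∀ i, f x i ∈ X i

namespace FDS

variable {V : Type}

/-- `x` is a state of the system, i.e. `x ∈ X`. -/
def mem (F : FDS V) (x : V → ℤ) : Prop := ∀ i, x i ∈ F.X i

/-- `G` is the interaction graph of `F`: there is a positive (negative) arc from
`j` to `i` iff increasing `x j` by one can strictly increase (decrease) `f _ i`. -/
def onGraph [DecidableEq V] (F : FDS V) (G : SDigraph V) : Prop :=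
  (∀ j i, G.pos j i = true ↔ ∃ x, F.mem x ∧ x j + 1 ∈ F.X j ∧
      F.f x i < F.f (Function.update x j (x j + 1)) i) ∧
  (∀ j i, G.neg j i = true ↔ ∃ x, F.mem x ∧ x j + 1 ∈ F.X j ∧
      F.f (Function.update x j (x j + 1)) i < F.f x i)

/-- `F` is degree-bounded with respect to `G`. -/
def degreeBounded [Fintype V] (F : FDS V) (G : SDigraph V) : Prop :=
  ∀ i, (G.outdeg i = 0 ∧ 0 < G.indeg i → (F.X i).card = 2) ∧
    (¬(G.outdeg i = 0 ∧ 0 < G.indeg i) → (F.X i).card ≤ G.outdeg i + 1)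

/-- Fixed points of `F`. -/
def IsFixed (F : FDS V) (x : V → ℤ) : Prop := F.mem x ∧ F.f x = x

/-- `F` is nilpotent: some iterate is constant on `X`. -/
def Nilpotent (F : FDS V) : Prop :=
  ∃ k : ℕ, 1 ≤ k ∧ ∃ c, ∀ x, F.mem x → F.f^[k] x = c

/-- `F` converges toward `H` in `k` steps:
`f^k(X) ⊆ h(Y) ⊆ Y ⊆ X` and `f = h` on `Y`. -/
def ConvergesToward (F H : FDS V) (k : ℕ) : Prop :=
  (∀ i, H.X i ⊆ F.X i) ∧
  (∀ x, F.mem x → ∃ y, H.mem y ∧ F.f^[k] x = H.f y) ∧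
  (∀ x, H.mem x → F.f x = H.f x)

end FDS

/-!
If there is no arc `j → i`, then `f_i` cannot change when `x_j` moves by one step inside the
interval `X_j`, hence does not depend on `x_j` at all. By induction, `(f^k x)_i` depends only on
the coordinates `x_j` from which a walk of length `k` leads to `i`. A walk of length `n` repeats a
vertex and so contains a cycle; without cycles `f^n` is therefore constant, and its value `c` is
the unique fixed point: `f c = f^n (f x) = c`, and a fixed point `x` equals `f^n x = c`.
-/

theorem Set.OrdConnected.apply_eq_of_forall_add_one {α : Type*} {S : Set ℤ} (hS : S.OrdConnected)
    {g : ℤ → α} (h : ∀ c ∈ S, c + 1 ∈ S → g (c + 1) = g c) {a b : ℤ} (ha : a ∈ S) (hb : b ∈ S) :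
    g a = g b := by
  wlog hab : a ≤ b generalizing a b
  · exact (this hb ha (le_of_not_ge hab)).symm
  induction b, hab using Int.leInduction with
  | base => rfl
  | succ b hab ih =>
    have hb' : b ∈ S := hS.out ha hb ⟨hab, by omega⟩
    rw [h b hb' hb]
    exact ih hb'

theorem apply_eq_of_forall_update_eq {ι β γ : Type*} [Fintype ι] [DecidableEq ι]
    {S : ι → Set β} {A : Set ι} {g : (ι → β) → γ}
    (hg : ∀ x ∈ Set.univ.pi S, ∀ j ∉ A, ∀ c ∈ S j, g (Function.update x j c) = g x)
    {x y : ι → β} (hx : x ∈ Set.univ.pi S) (hy : y ∈ Set.univ.pi S)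
    (hxy : ∀ j ∈ A, x j = y j) : g x = g y := by
  have hpiecewise : ∀ s : Finset ι, g (s.piecewise y x) = g x := by
    intro s
    induction s using Finset.induction_on with
    | empty => simp
    | insert j s hj ih =>
      rw [Finset.piecewise_insert, ← ih]
      by_cases hjA : j ∈ A
      · have hyj : s.piecewise y x j = y j := by
          rw [Finset.piecewise_eq_of_notMem _ _ _ hj, hxy j hjA]
        rw [← hyj, Function.update_eq_self]
      · exact hg _ (Finset.piecewise_mem_set_pi _ hy hx) j hjA (y j) (hy j trivial)
  rw [← hpiecewise Finset.univ, Finset.piecewise_univ]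

theorem Set.MapsTo.existsUnique_fixed_of_iterate_eq_const {α : Type*} {f : α → α} {s : Set α}
    (hf : Set.MapsTo f s s) (hs : s.Nonempty) {n : ℕ} {c : α} (hc : ∀ x ∈ s, f^[n] x = c) :
    ∃! x, x ∈ s ∧ f x = x := by
  obtain ⟨x₀, hx₀⟩ := hs
  have hcs : c ∈ s := hc x₀ hx₀ ▸ hf.iterate n hx₀
  refine ⟨c, ⟨hcs, ?_⟩, fun x hx => ?_⟩
  · calc f c = f (f^[n] x₀) := by rw [hc x₀ hx₀]
      _ = f^[n] (f x₀) := by rw [← Function.iterate_succ_apply' f n, Function.iterate_succ_apply]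
      _ = c := hc _ (hf hx₀)
  · rw [← hc x hx.1, Function.iterate_fixed hx.2]

theorem Set.exists_lt_apply_eq_of_not_injOn_Iio {α : Type*} {w : ℕ → α} {L : ℕ}
    (h : ¬ Set.InjOn w (Set.Iio L)) : ∃ s t, s < t ∧ t < L ∧ w s = w t := by
  simp only [Set.InjOn, Set.mem_Iio, not_forall] at h
  obtain ⟨a, ha, b, hb, hab, hne⟩ := h
  rcases lt_or_gt_of_ne hne with hlt | hlt
  exacts [⟨a, b, hlt, hb, hab⟩, ⟨b, a, hlt, ha, hab.symm⟩]

namespace SDigraph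

variable {V : Type} {G : SDigraph V}

def IsWalk (G : SDigraph V) (w : ℕ → V) (k : ℕ) : Prop :=
  ∀ t < k, G.arc (w t) (w (t + 1))

theorem exists_isWalk_of_steps : ∀ {k : ℕ} {a b : V}, G.steps k a b →
    ∃ w : ℕ → V, w 0 = a ∧ w k = b ∧ G.IsWalk w k
  | 0, a, _, rfl => ⟨fun _ => a, rfl, rfl, fun _ h => absurd h (Nat.not_lt_zero _)⟩
  | _ + 1, a, _, ⟨_, hac, hcb⟩ => by
    obtain ⟨w, hw0, hwk, hw⟩ := exists_isWalk_of_steps hcb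
    refine ⟨fun t => Nat.casesOn t a w, rfl, hwk, ?_⟩
    rintro (_ | t) ht
    · simpa [hw0] using hac
    · exact hw t (by omega)

theorem IsWalk.shift {w : ℕ → V} {k : ℕ} (hw : G.IsWalk w k) {s L : ℕ} (h : s + L ≤ k) :
    G.IsWalk (fun u => w (s + u)) L :=
  fun u hu => hw (s + u) (by omega)

theorem hasCycle_of_isWalk_of_injOn {w : ℕ → V} {m : ℕ} (hw : G.IsWalk w (m + 1))
    (hclosed : w (m + 1) = w 0) (hinj : Set.InjOn w (Set.Iio (m + 1))) : G.HasCycle := by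
  refine ⟨m, fun t => w t, fun s t hst => Fin.ext (hinj s.isLt t.isLt hst), fun t => ?_⟩
  have harc := hw t t.isLt
  show G.arc (w t) (w ↑(t + 1))
  rw [Fin.val_add_one]
  split_ifs with ht
  · subst ht
    simpa [hclosed] using harc
  · exact harc

theorem hasCycle_of_closed_isWalk {L : ℕ} {w : ℕ → V} (hL : 0 < L) (hw : G.IsWalk w L)
    (hclosed : w L = w 0) : G.HasCycle := by
  induction L using Nat.strong_induction_on generalizing w with
  | _ L ih =>
    by_cases hinj : Set.InjOn w (Set.Iio L)
    · obtain ⟨m, rfl⟩ : ∃ m, L = m + 1 := ⟨L - 1, by omega⟩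
      exact hasCycle_of_isWalk_of_injOn hw hclosed hinj
    · obtain ⟨s, t, hst, htL, heq⟩ := Set.exists_lt_apply_eq_of_not_injOn_Iio hinj
      exact ih (t - s) (by omega) (by omega) (hw.shift (s := s) (by omega))
        (by simpa [Nat.add_sub_cancel' hst.le] using heq.symm)

theorem not_steps_card_of_not_hasCycle [Fintype V] (hG : ¬ G.HasCycle) (a b : V) :
    ¬ G.steps (Fintype.card V) a b := by
  intro h
  obtain ⟨w, -, -, hw⟩ := exists_isWalk_of_steps h
  have hinj : ¬ Set.InjOn w (Set.Iio (Fintype.card V + 1)) := fun hinj => by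
    simpa using Finset.card_le_card_of_injOn w (s := Finset.range (Fintype.card V + 1))
      (fun _ _ => Finset.mem_univ _) (by simpa using hinj)
  obtain ⟨s, t, hst, ht, heq⟩ := Set.exists_lt_apply_eq_of_not_injOn_Iio hinj
  exact hG (hasCycle_of_closed_isWalk (L := t - s) (by omega) (hw.shift (s := s) (by omega))
    (by simpa [Nat.add_sub_cancel' hst.le] using heq.symm))

end SDigraph

namespace FDS

variable {V : Type}

theorem ordConnected_X (F : FDS V) (i : V) : (F.X i : Set ℤ).OrdConnected :=
  ⟨fun a ha b hb c hc => F.interval i a ha b hb c hc.1 hc.2⟩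

variable [DecidableEq V] {F : FDS V} {G : SDigraph V}

theorem mem_update {x : V → ℤ} (hx : F.mem x) {j : V} {c : ℤ} (hc : c ∈ F.X j) :
    F.mem (Function.update x j c) :=
  (Function.forall_update_iff x (p := fun l v => v ∈ F.X l)).2 ⟨hc, fun l _ => hx l⟩

theorem apply_update_add_one_eq_of_not_arc (hG : F.onGraph G) {j i : V} (hji : ¬ G.arc j i)
    {x : V → ℤ} (hx : F.mem x) (hx1 : x j + 1 ∈ F.X j) :
    F.f (Function.update x j (x j + 1)) i = F.f x i := by
  have hpos := (hG.1 j i).not.mp fun h => hji (Or.inl h)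
  have hneg := (hG.2 j i).not.mp fun h => hji (Or.inr h)
  simp only [not_exists, not_and, not_lt] at hpos hneg
  exact le_antisymm (hpos x hx hx1) (hneg x hx hx1)

theorem apply_update_eq_of_not_arc (hG : F.onGraph G) {j i : V} (hji : ¬ G.arc j i)
    {x : V → ℤ} (hx : F.mem x) {c : ℤ} (hc : c ∈ F.X j) :
    F.f (Function.update x j c) i = F.f x i := by
  have hstep : ∀ d ∈ (F.X j : Set ℤ), d + 1 ∈ (F.X j : Set ℤ) →
      F.f (Function.update x j (d + 1)) i = F.f (Function.update x j d) i := by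
    intro d hd hd1
    simpa using apply_update_add_one_eq_of_not_arc hG hji (mem_update hx hd) (by simpa using hd1)
  simpa using (F.ordConnected_X j).apply_eq_of_forall_add_one
    (g := fun d => F.f (Function.update x j d) i) hstep hc (hx j)

theorem apply_eq_of_eq_on_arcs [Fintype V] (hG : F.onGraph G) {i : V} {x y : V → ℤ}
    (hx : F.mem x) (hy : F.mem y) (h : ∀ j, G.arc j i → x j = y j) : F.f x i = F.f y i :=
  apply_eq_of_forall_update_eq (S := fun l => (F.X l : Set ℤ)) (A := {j | G.arc j i})
    (g := fun x => F.f x i)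
    (fun _ hx' _ hj _ hc => apply_update_eq_of_not_arc hG hj (Set.mem_univ_pi.1 hx') hc)
    (Set.mem_univ_pi.2 hx) (Set.mem_univ_pi.2 hy) h

theorem iterate_apply_eq_of_eq_on_steps [Fintype V] (hG : F.onGraph G) (k : ℕ) (i : V)
    {x y : V → ℤ} (hx : F.mem x) (hy : F.mem y) (h : ∀ j, G.steps k j i → x j = y j) :
    F.f^[k] x i = F.f^[k] y i := by
  induction k generalizing x y with
  | zero => exact h i rfl
  | succ k ih =>
    refine ih (F.maps x hx) (F.maps y hy) fun j hj => apply_eq_of_eq_on_arcs hG hx hy ?_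
    exact fun l hl => h l ⟨j, hl, hj⟩

end FDS

/-- If the interaction graph of an FDS with `n` components has no cycle,
then `f^n` is constant; in particular `f` has a unique fixed point. -/
theorem stmt2 (n : ℕ) (F : FDS (Fin n)) (G : SDigraph (Fin n)) (hG : F.onGraph G)
    (hac : ¬ SDigraph.HasCycle G) :
    (∃ c : Fin n → ℤ, ∀ x, F.mem x → F.f^[n] x = c) ∧
    (∃! x : Fin n → ℤ, F.IsFixed x) := by
  obtain ⟨x₀, hx₀⟩ : ∃ x, F.mem x :=
    ⟨fun i => (F.nonempty i).choose, fun i => (F.nonempty i).choose_spec⟩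
  have hconst : ∀ x, F.mem x → F.f^[n] x = F.f^[n] x₀ := fun x hx => funext fun i =>
    FDS.iterate_apply_eq_of_eq_on_steps hG n i hx hx₀ fun j hj =>
      absurd hj (by simpa using G.not_steps_card_of_not_hasCycle hac j i)
  exact ⟨⟨_, hconst⟩, Set.MapsTo.existsUnique_fixed_of_iterate_eq_const
    (s := {x | F.mem x}) (fun x hx => F.maps x hx) ⟨x₀, hx₀⟩ hconst⟩
end

section
/- If G is a connected signed digraph with a negative cycle, then there exists a degree-bounded finite dynamical system on G without any fixed point. -/
open scoped Classical

/-!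
Every vertex `j` takes the values `0, …, max 1 (outdeg j)`, and each out-arc of `j` gets its own
threshold in `1, …, outdeg j`: a positive arc is *on* when `x j` is at or above its threshold, a negative arc
when `x j` is below it. A unit increase of `x j` therefore switches at most one arc into each
target, in the direction of its sign. The next value of `i` is `liveLevel i - 1` or
`liveLevel i`, according to a monotone gate of the in-arcs of `i` in which every input is
essential; this makes the interaction graph exactly `G`.

Each vertex has one *live* out-arc (on the negative cycle, the cycle arc), and the thresholds are
placed so that at the two values a fixed point can take only the live arc can be on. The live arcs
form a functional graph; on the vertices whose live path enters the cycle, the fixed-point states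
are forced, by recursion on the distance to the cycle. The gates are chosen so that these forced
inputs are neutral, hence at a fixed point every cycle vertex copies the state of its predecessor
through the sign of the cycle arc, which is impossible around a cycle with an odd number of
negative arcs.
-/

open Finset

section AndOrGate

variable {α : Type*} {I S : Finset α} {β β' : α → Prop} {a : α}

/-- Monotone in `β`, every input of `I` is essential, and when exactly the inputs of `S` are on,
its value is `S.Nonempty`. -/
def AndOrGate (I S : Finset α) (β : α → Prop) : Prop :=
  (S.Nonempty ∧ ∀ b ∈ S, β b) ∨ ∃ b ∈ I, b ∉ S ∧ β b

lemma AndOrGate.mono (hS : S ⊆ I) (h : ∀ b ∈ I, β b → β' b) :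
    AndOrGate I S β → AndOrGate I S β'
  | .inl ⟨hne, hall⟩ => .inl ⟨hne, fun b hb => h b (hS hb) (hall b hb)⟩
  | .inr ⟨b, hb, hbS, hβ⟩ => .inr ⟨b, hb, hbS, h b hb hβ⟩

lemma AndOrGate.exists_of_not (hS : S ⊆ I) (h : ¬ AndOrGate I S β) (h' : AndOrGate I S β') :
    ∃ b ∈ I, ¬ β b ∧ β' b := by
  by_contra! hc
  exact h (h'.mono hS fun b hb hβ' => by_contra fun hβ => hc b hb hβ hβ')

lemma andOrGate_iff_of_mem (ha : a ∈ S) (hon : ∀ b ∈ S, b ≠ a → β b)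
    (hoff : ∀ b ∈ I, b ∉ S → ¬ β b) : AndOrGate I S β ↔ β a := by
  refine ⟨?_, fun hβ => .inl ⟨⟨a, ha⟩, fun b hb => ?_⟩⟩
  · rintro (⟨-, hall⟩ | ⟨b, hb, hbS, hβ⟩)
    · exact hall a ha
    · exact absurd hβ (hoff b hb hbS)
  · by_cases hba : b = a
    · exact hba ▸ hβ
    · exact hon b hb hba

lemma andOrGate_iff_of_not_mem (hS : S ⊆ I) (ha : a ∈ I) (haS : a ∉ S)
    (hoff : ∀ b ∈ I, b ≠ a → ¬ β b) : AndOrGate I S β ↔ β a := by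
  refine ⟨?_, fun hβ => .inr ⟨a, ha, haS, hβ⟩⟩
  rintro (⟨⟨b, hb⟩, hall⟩ | ⟨b, hb, -, hβ⟩)
  · exact absurd (hall b hb) (hoff b (hS hb) fun hba => haS (hba ▸ hb))
  · by_cases hba : b = a
    · exact hba ▸ hβ
    · exact absurd hβ (hoff b hb hba)

lemma andOrGate_iff_nonempty (hon : ∀ b ∈ S, β b) (hoff : ∀ b ∈ I, b ∉ S → ¬ β b) :
    AndOrGate I S β ↔ S.Nonempty := by
  refine ⟨?_, fun hne => .inl ⟨hne, hon⟩⟩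
  rintro (⟨hne, -⟩ | ⟨b, hb, hbS, hβ⟩)
  · exact hne
  · exact absurd hβ (hoff b hb hbS)

end AndOrGate

namespace SDigraph

lemma negCount_mod_two_eq_zero_of_cyclic {m : ℕ} {s : Fin (m + 1) → Bool} {P : Fin (m + 1) → Prop}
    (h : ∀ t, P (t + 1) ↔ (P t ↔ s t = true)) : negCount s % 2 = 0 := by
  let z : Fin (m + 1) → ZMod 2 := fun t => if P t then 1 else 0
  have hstep : ∀ t, z (t + 1) - z t = if s t = false then 1 else 0 := by
    intro t
    have := h t
    by_cases hP : P t <;> by_cases hs : s t = true <;> simp_all [z]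
  have hsum : ((negCount s : ℕ) : ZMod 2) = 0 := by
    rw [negCount, natCast_card_filter, ← sum_congr rfl fun t _ => hstep t, sum_sub_distrib,
      sub_eq_zero]
    exact Equiv.sum_comp (Equiv.addRight 1) z
  exact Nat.even_iff.1 ((ZMod.natCast_eq_zero_iff_even).1 hsum)

section SignedArc

variable {V : Type} (G : SDigraph V)

def SignedArc (j i : V) (σ : Bool) : Prop :=
  if σ then G.pos j i = true else G.neg j i = true

variable {G}

lemma SignedArc.arc {j i : V} {σ : Bool} (h : G.SignedArc j i σ) : G.arc j i := by
  cases σ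
  · exact .inr h
  · exact .inl h

end SignedArc

section Degrees

variable {V : Type} [Fintype V] (G : SDigraph V)

noncomputable def outArcs (j : V) : Finset (V × Bool) :=
  univ.filter fun a => G.SignedArc j a.1 a.2

noncomputable def inArcs (i : V) : Finset (V × Bool) :=
  univ.filter fun a => G.SignedArc a.1 i a.2

noncomputable def negOutdeg (j : V) : ℕ :=
  ((G.outArcs j).filter fun a => a.2 = false).card

variable {G}

@[simp] lemma mem_outArcs {j : V} {a : V × Bool} : a ∈ G.outArcs j ↔ G.SignedArc j a.1 a.2 := by
  simp [outArcs]

@[simp] lemma mem_inArcs {i : V} {a : V × Bool} : a ∈ G.inArcs i ↔ G.SignedArc a.1 i a.2 := by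
  simp [inArcs]

lemma mem_inArcs_iff_mem_outArcs {i : V} {a : V × Bool} :
    a ∈ G.inArcs i ↔ (i, a.2) ∈ G.outArcs a.1 := by
  simp

lemma outdeg_eq_card_outArcs (j : V) : G.outdeg j = (G.outArcs j).card := by
  rw [outdeg, outArcs, card_filter, card_filter, card_filter, Fintype.sum_prod_type,
    ← sum_add_distrib]
  refine sum_congr rfl fun i _ => ?_
  rw [Fintype.sum_bool]
  simp [SignedArc]

lemma negOutdeg_le_outdeg (j : V) : G.negOutdeg j ≤ G.outdeg j :=
  G.outdeg_eq_card_outArcs j ▸ card_filter_le _ _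

lemma negOutdeg_add_card_pos (j : V) :
    G.negOutdeg j + ((G.outArcs j).filter fun a => a.2 = true).card = G.outdeg j := by
  rw [outdeg_eq_card_outArcs, negOutdeg,
    ← card_filter_add_card_filter_not (s := G.outArcs j) (fun a => a.2 = false)]
  simp

lemma negOutdeg_pos {j : V} {a : V × Bool} (ha : a ∈ G.outArcs j) (h : a.2 = false) :
    0 < G.negOutdeg j :=
  card_pos.2 ⟨a, mem_filter.2 ⟨ha, h⟩⟩

lemma one_lt_negOutdeg {j : V} {a b : V × Bool} (ha : a ∈ G.outArcs j) (hb : b ∈ G.outArcs j)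
    (hab : a ≠ b) (ha2 : a.2 = false) (hb2 : b.2 = false) : 1 < G.negOutdeg j :=
  one_lt_card.2 ⟨a, mem_filter.2 ⟨ha, ha2⟩, b, mem_filter.2 ⟨hb, hb2⟩, hab⟩

lemma negOutdeg_lt_outdeg {j : V} {a : V × Bool} (ha : a ∈ G.outArcs j) (h : a.2 = true) :
    G.negOutdeg j < G.outdeg j := by
  have : 0 < ((G.outArcs j).filter fun a => a.2 = true).card := card_pos.2 ⟨a, mem_filter.2 ⟨ha, h⟩⟩
  have := G.negOutdeg_add_card_pos j
  omega

lemma negOutdeg_add_two_le_outdeg {j : V} {a b : V × Bool} (ha : a ∈ G.outArcs j)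
    (hb : b ∈ G.outArcs j) (hab : a ≠ b) (ha2 : a.2 = true) (hb2 : b.2 = true) :
    G.negOutdeg j + 2 ≤ G.outdeg j := by
  have : 1 < ((G.outArcs j).filter fun a => a.2 = true).card :=
    one_lt_card.2 ⟨a, mem_filter.2 ⟨ha, ha2⟩, b, mem_filter.2 ⟨hb, hb2⟩, hab⟩
  have := G.negOutdeg_add_card_pos j
  omega

lemma outdeg_pos_of_arc {j i : V} (h : G.arc j i) : 0 < G.outdeg j := by
  rw [outdeg_eq_card_outArcs]
  rcases h with h | h
  · exact card_pos.2 ⟨(i, true), mem_outArcs.2 h⟩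
  · exact card_pos.2 ⟨(i, false), mem_outArcs.2 h⟩

lemma indeg_pos_of_arc {j i : V} (h : G.arc j i) : 0 < G.indeg i := by
  rw [indeg]
  rcases h with h | h
  · have : 0 < (univ.filter fun j => G.pos j i = true).card := card_pos.2 ⟨j, by simpa using h⟩
    omega
  · have : 0 < (univ.filter fun j => G.neg j i = true).card := card_pos.2 ⟨j, by simpa using h⟩
    omega

lemma Connected.outdeg_pos_or_indeg_pos (hconn : G.Connected) {a b : V} (hab : G.arc a b)
    (i : V) : 0 < G.outdeg i ∨ 0 < G.indeg i := by
  rcases (hconn i a).cases_head with rfl | ⟨c, hic | hci, -⟩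
  · exact .inl (outdeg_pos_of_arc hab)
  · exact .inl (outdeg_pos_of_arc hic)
  · exact .inr (indeg_pos_of_arc hci)

end Degrees

section Levels

variable {V : Type} [Fintype V] (G : SDigraph V) (A : V → V × Bool)

/-- Negative arcs get thresholds `≤ negOutdeg j` and positive ones `> negOutdeg j`, so all arcs
of `j` are off at `x j = negOutdeg j`; the live arc `A j` sits next to `negOutdeg j` and the other
arcs at the extremes `1` and `outdeg j`, so that only the live arc can be on at
`x j ∈ {liveLevel j - 1, liveLevel j}`. -/
noncomputable def level (j : V) (a : V × Bool) : ℕ :=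
  if a.2 then (if A j = a then G.negOutdeg j + 1 else G.outdeg j)
  else (if A j = a then G.negOutdeg j else 1)

noncomputable def liveLevel (j : V) : ℕ :=
  if (A j).2 then G.negOutdeg j + 1 else G.negOutdeg j

def bit (x : V → ℤ) (j : V) (a : V × Bool) : Prop :=
  if a.2 then (G.level A j a : ℤ) ≤ x j else x j < G.level A j a

variable {G A} {j : V} {a b : V × Bool} {x x' : V → ℤ}

lemma level_live : G.level A j (A j) = G.liveLevel A j := by
  by_cases h : (A j).2 <;> simp [level, liveLevel, h]

lemma one_le_level (ha : a ∈ G.outArcs j) : 1 ≤ G.level A j a := by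
  unfold level
  split_ifs with h2 hl hl <;> try omega
  · have := G.negOutdeg_lt_outdeg ha h2; omega
  · exact G.negOutdeg_pos ha (by simpa using h2)

lemma level_le_outdeg (ha : a ∈ G.outArcs j) : G.level A j a ≤ G.outdeg j := by
  unfold level
  split_ifs with h2 hl hl
  · exact G.negOutdeg_lt_outdeg ha h2
  · exact le_rfl
  · exact G.negOutdeg_le_outdeg j
  · have := G.negOutdeg_pos ha (by simpa using h2)
    have := G.negOutdeg_le_outdeg j
    omega

lemma level_le_negOutdeg (ha : a ∈ G.outArcs j) (h2 : a.2 = false) :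
    G.level A j a ≤ G.negOutdeg j := by
  have := G.negOutdeg_pos ha h2
  simp only [level, h2, Bool.false_eq_true, if_false]
  split_ifs <;> omega

lemma negOutdeg_lt_level (ha : a ∈ G.outArcs j) (h2 : a.2 = true) :
    G.negOutdeg j < G.level A j a := by
  have := G.negOutdeg_lt_outdeg ha h2
  simp only [level, h2, if_true]
  split_ifs <;> omega

lemma bit_congr (h : x j = x' j) : G.bit A x j a ↔ G.bit A x' j a := by
  simp only [bit, h]

lemma bit_of_le (h2 : a.2 = true) (hx : x j ≤ x' j) (h : G.bit A x j a) : G.bit A x' j a := by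
  simp only [bit, h2, if_true] at h ⊢
  omega

lemma bit_of_ge (h2 : a.2 = false) (hx : x' j ≤ x j) (h : G.bit A x j a) : G.bit A x' j a := by
  simp only [bit, h2, Bool.false_eq_true, if_false] at h ⊢
  omega

lemma bit_iff_of_eq_level_sub_one (hx : x j = G.level A j a - 1) :
    G.bit A x j a ↔ a.2 = false := by
  cases h2 : a.2 <;> simp [bit, h2, hx]

lemma bit_iff_of_eq_level (hx : x j = G.level A j a) : G.bit A x j a ↔ a.2 = true := by
  cases h2 : a.2 <;> simp [bit, h2, hx]

lemma not_bit_of_eq_negOutdeg (ha : a ∈ G.outArcs j) (hx : x j = G.negOutdeg j) :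
    ¬ G.bit A x j a := by
  cases h2 : a.2
  · have := level_le_negOutdeg (A := A) ha h2
    simp only [bit, h2, hx, Bool.false_eq_true, if_false]
    omega
  · have := negOutdeg_lt_level (A := A) ha h2
    simp only [bit, h2, hx, if_true]
    omega

lemma not_bit_of_sign_ne (ha : a ∈ G.outArcs j) (hb : b ∈ G.outArcs j) (hab : b.2 ≠ a.2)
    (hx : x j = G.level A j a - 1 ∨ x j = G.level A j a) : ¬ G.bit A x j b := by
  cases h2 : a.2
  · have hb2 : b.2 = true := by simpa [h2] using hab
    have := level_le_negOutdeg (A := A) ha h2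
    have := negOutdeg_lt_level (A := A) hb hb2
    simp only [bit, hb2, if_true]
    omega
  · have hb2 : b.2 = false := by simpa [h2] using hab
    have := negOutdeg_lt_level (A := A) ha h2
    have := level_le_negOutdeg (A := A) hb hb2
    simp only [bit, hb2, Bool.false_eq_true, if_false]
    omega

lemma not_bit_of_ne_live (hA : A j ∈ G.outArcs j) (ha : a ∈ G.outArcs j) (hne : a ≠ A j)
    (hx : x j = G.liveLevel A j - 1 ∨ x j = G.liveLevel A j) : ¬ G.bit A x j a := by
  have hlevel : G.level A j a = if a.2 then G.outdeg j else 1 := by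
    simp [level, Ne.symm hne]
  cases h2 : a.2 <;> cases hA2 : (A j).2 <;>
    simp only [bit, hlevel, liveLevel, h2, hA2, Bool.false_eq_true, if_false, if_true] at hx ⊢
  · have := one_lt_negOutdeg ha hA hne h2 hA2; omega
  · have := G.negOutdeg_pos ha h2; omega
  · have := G.negOutdeg_lt_outdeg ha h2; omega
  · have := negOutdeg_add_two_le_outdeg ha hA hne h2 hA2; omega

lemma bit_live_iff (hx : x j = G.liveLevel A j - 1 ∨ x j = G.liveLevel A j) :
    G.bit A x j (A j) ↔ (x j = G.liveLevel A j ↔ (A j).2 = true) := by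
  rcases hx with hx | hx
  · rw [bit_iff_of_eq_level_sub_one (by rw [level_live, hx]), hx]
    simp
  · rw [bit_iff_of_eq_level (by rw [level_live, hx]), hx]
    simp

end Levels

section ReachesAlong

variable {V : Type} (A : V → V × Bool) (C : Set V)

def ReachesAlong (u : V) : Prop := ∃ t, (fun w => (A w).1)^[t] u ∈ C

noncomputable def depth (u : V) : ℕ := if h : ReachesAlong A C u then Nat.find h else 0

variable {A C}

lemma ReachesAlong.of_mem {u : V} (hu : u ∈ C) : ReachesAlong A C u := ⟨0, hu⟩

lemma ReachesAlong.of_next {w : V} (h : ReachesAlong A C (A w).1) : ReachesAlong A C w :=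
  let ⟨t, ht⟩ := h; ⟨t + 1, ht⟩

lemma ReachesAlong.next_and_depth_eq {w : V} (h : ReachesAlong A C w) (hw : w ∉ C) :
    ReachesAlong A C (A w).1 ∧ depth A C w = depth A C (A w).1 + 1 := by
  have hfind : Nat.find h ≠ 0 := fun h0 => hw (by simpa [h0] using Nat.find_spec h)
  obtain ⟨d, hd⟩ := Nat.exists_eq_succ_of_ne_zero hfind
  have hnext : ReachesAlong A C (A w).1 := ⟨d, by simpa [hd] using Nat.find_spec h⟩
  refine ⟨hnext, ?_⟩
  rw [depth, depth, dif_pos h, dif_pos hnext]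
  refine le_antisymm (Nat.find_min' h (Nat.find_spec hnext)) ?_
  rw [hd, Nat.succ_le_succ_iff]
  exact Nat.find_min' hnext (by simpa [hd] using Nat.find_spec h)

end ReachesAlong

section Forced

variable {V : Type} [Fintype V] (G : SDigraph V) (A : V → V × Bool) (C : Set V)

/-- The state (`x u = liveLevel u`) that a fixed point must have at a vertex `u ∉ C` whose live
path enters `C`; the live in-neighbours of `u` are one step farther from `C`. -/
noncomputable def forced (u : V) : Bool :=
  decide (∃ a : {a : V × Bool //
      a ∈ G.inArcs u ∧ A a.1 = (u, a.2) ∧ a.1 ∉ C ∧ ReachesAlong A C a.1},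
    forced a.1.1 = a.1.2)
termination_by univ.sup (depth A C) - depth A C u
decreasing_by
  all_goals
    obtain ⟨-, hlive, hC, hreach⟩ := a.2
    have hdepth := (hreach.next_and_depth_eq hC).2
    have := le_sup (f := depth A C) (mem_univ a.1.1)
    rw [hlive] at hdepth
    dsimp only at hdepth
    omega

variable {G A C}

lemma forced_eq_true_iff {u : V} : G.forced A C u = true ↔ ∃ a ∈ G.inArcs u,
    A a.1 = (u, a.2) ∧ a.1 ∉ C ∧ ReachesAlong A C a.1 ∧ G.forced A C a.1 = a.2 := by
  rw [forced.eq_1, decide_eq_true_iff]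
  constructor
  · rintro ⟨⟨a, ha, hlive, hC, hreach⟩, hf⟩
    exact ⟨a, ha, hlive, hC, hreach, hf⟩
  · rintro ⟨a, ha, hlive, hC, hreach, hf⟩
    exact ⟨⟨a, ha, hlive, hC, hreach⟩, hf⟩

end Forced

section LiveFDS

variable {V : Type} [Fintype V] (G : SDigraph V) (A : V → V × Bool) (C : Set V)

/-- The live in-arcs of `i` from `C`, and those from vertices with forced states whose bit is on
at every fixed point. -/
noncomputable def selectedArcs (i : V) : Finset (V × Bool) :=
  (G.inArcs i).filter fun a =>
    A a.1 = (i, a.2) ∧ (a.1 ∈ C ∨ (ReachesAlong A C a.1 ∧ G.forced A C a.1 = a.2))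

def liveGate (x : V → ℤ) (i : V) : Prop :=
  AndOrGate (G.inArcs i) (G.selectedArcs A C i) fun b => G.bit A x b.1 (i, b.2)

noncomputable def liveMap (x : V → ℤ) (i : V) : ℤ :=
  G.liveLevel A i - 1 + if G.liveGate A C x i then 1 else 0

noncomputable def stateSpace (j : V) : Finset ℤ := Icc 0 ((max 1 (G.outdeg j) : ℕ) : ℤ)

def IsLiveChoice : Prop := ∀ j, A j ∈ G.outArcs j ∨ ((A j).2 = true ∧ G.outdeg j = 0)

variable {G A C}

lemma mem_selectedArcs {i : V} {a : V × Bool} :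
    a ∈ G.selectedArcs A C i ↔ a ∈ G.inArcs i ∧
      A a.1 = (i, a.2) ∧ (a.1 ∈ C ∨ (ReachesAlong A C a.1 ∧ G.forced A C a.1 = a.2)) :=
  mem_filter

lemma selectedArcs_subset_inArcs {i : V} : G.selectedArcs A C i ⊆ G.inArcs i := filter_subset _ _

lemma mem_stateSpace {j : V} {w : ℤ} :
    w ∈ G.stateSpace j ↔ 0 ≤ w ∧ w ≤ ((max 1 (G.outdeg j) : ℕ) : ℤ) := by
  simp [stateSpace]

lemma IsLiveChoice.mem_outArcs (hA : G.IsLiveChoice A) {j : V} {a : V × Bool}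
    (ha : a ∈ G.outArcs j) : A j ∈ G.outArcs j :=
  (hA j).resolve_right fun h => by
    have := G.outdeg_eq_card_outArcs j ▸ card_pos.2 ⟨a, ha⟩
    omega

lemma IsLiveChoice.one_le_liveLevel (hA : G.IsLiveChoice A) (j : V) : 1 ≤ G.liveLevel A j := by
  rw [liveLevel]
  split_ifs with h2
  · omega
  · exact G.negOutdeg_pos ((hA j).resolve_right fun h => h2 h.1) (by simpa using h2)

lemma IsLiveChoice.liveLevel_le (hA : G.IsLiveChoice A) (j : V) :
    G.liveLevel A j ≤ max 1 (G.outdeg j) := by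
  rcases hA j with hmem | ⟨h2, h0⟩
  · exact level_live (G := G) ▸ (level_le_outdeg hmem).trans (le_max_right _ _)
  · have := G.negOutdeg_le_outdeg j
    simp only [liveLevel, h2, if_true]
    omega

lemma IsLiveChoice.liveMap_mem (hA : G.IsLiveChoice A) (x : V → ℤ) (i : V) :
    G.liveMap A C x i ∈ G.stateSpace i := by
  have := hA.one_le_liveLevel i
  have := hA.liveLevel_le i
  rw [mem_stateSpace, liveMap]
  split_ifs <;> constructor <;> push_cast <;> omega

noncomputable def IsLiveChoice.liveFDS (hA : G.IsLiveChoice A) (C : Set V) : FDS V where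
  X := G.stateSpace
  nonempty _ := ⟨0, mem_stateSpace.2 ⟨le_rfl, by positivity⟩⟩
  interval _ _ ha _ hb _ hac hcb := by
    rw [mem_stateSpace] at *
    exact ⟨ha.1.trans hac, hcb.trans hb.2⟩
  f := G.liveMap A C
  maps x _ := hA.liveMap_mem x

lemma liveMap_lt_liveMap_iff {x x' : V → ℤ} {i : V} :
    G.liveMap A C x i < G.liveMap A C x' i ↔
      ¬ G.liveGate A C x i ∧ G.liveGate A C x' i := by
  unfold liveMap
  split_ifs <;> simp_all

lemma exists_bit_of_liveMap_lt {x x' : V → ℤ} {i : V} (h : G.liveMap A C x i < G.liveMap A C x' i) :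
    ∃ b ∈ G.inArcs i, ¬ G.bit A x b.1 (i, b.2) ∧ G.bit A x' b.1 (i, b.2) :=
  let ⟨hx, hx'⟩ := liveMap_lt_liveMap_iff.1 h
  AndOrGate.exists_of_not selectedArcs_subset_inArcs hx hx'

end LiveFDS

section Soundness

variable {V : Type} [Fintype V] {G : SDigraph V} {A : V → V × Bool} {C : Set V}

lemma signedArc_of_liveMap_lt_update [DecidableEq V] {x : V → ℤ} {i j : V}
    (h : G.liveMap A C x i < G.liveMap A C (Function.update x j (x j + 1)) i) :
    G.SignedArc j i true := by
  obtain ⟨b, hb, hoff, hon⟩ := exists_bit_of_liveMap_lt h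
  have hbj : b.1 = j := by
    by_contra hne
    exact hoff ((bit_congr (Function.update_of_ne hne _ _)).1 hon)
  have hb2 : b.2 = true := by
    by_contra hb2
    exact hoff (bit_of_ge (by simpa using hb2) (by simp [hbj]) hon)
  simpa [hbj, hb2] using hb

lemma signedArc_of_liveMap_update_lt [DecidableEq V] {x : V → ℤ} {i j : V}
    (h : G.liveMap A C (Function.update x j (x j + 1)) i < G.liveMap A C x i) :
    G.SignedArc j i false := by
  obtain ⟨b, hb, hoff, hon⟩ := exists_bit_of_liveMap_lt h
  have hbj : b.1 = j := by
    by_contra hne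
    exact hoff ((bit_congr (Function.update_of_ne hne _ _)).2 hon)
  have hb2 : b.2 = false := by
    by_contra hb2
    exact hoff (bit_of_le (by simpa using hb2) (by simp [hbj]) hon)
  simpa [hbj, hb2] using hb

end Soundness

section Realization

variable {V : Type} [Fintype V] (G : SDigraph V) (A : V → V × Bool) (C : Set V)

/-- A state in which the gate at `i` reduces to the bit of the arc `(j, σ)`. -/
noncomputable def witness (i j : V) (σ : Bool) (p : V) : ℤ :=
  if p = j then G.level A j (i, σ) - 1
  else if (j, σ) ∈ G.selectedArcs A C i ∧ (p, (A p).2) ∈ G.selectedArcs A C i then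
    (if (A p).2 then (G.liveLevel A p : ℤ) else G.liveLevel A p - 1)
  else G.negOutdeg p

variable {G A C}

lemma IsLiveChoice.witness_mem (hA : G.IsLiveChoice A) {i j : V} {σ : Bool}
    (ha : (j, σ) ∈ G.inArcs i) (p : V) : G.witness A C i j σ p ∈ G.stateSpace p := by
  have := hA.one_le_liveLevel p
  have := hA.liveLevel_le p
  have := G.negOutdeg_le_outdeg p
  have hout : (i, σ) ∈ G.outArcs j := mem_inArcs_iff_mem_outArcs.1 ha
  rw [mem_stateSpace, witness]
  split_ifs with hpj
  · subst hpj
    have := one_le_level (A := A) hout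
    have := level_le_outdeg (A := A) hout
    constructor <;> push_cast <;> omega
  all_goals constructor <;> push_cast <;> omega

lemma IsLiveChoice.bit_witness_iff (hA : G.IsLiveChoice A) {i j : V} {σ : Bool} {x : V → ℤ}
    {b : V × Bool} (hb : b ∈ G.inArcs i) (hbj : b.1 ≠ j) (hx : x b.1 = G.witness A C i j σ b.1) :
    G.bit A x b.1 (i, b.2) ↔ (j, σ) ∈ G.selectedArcs A C i ∧ b ∈ G.selectedArcs A C i := by
  have hout := mem_inArcs_iff_mem_outArcs.1 hb
  have hlive_of_mem : b ∈ G.selectedArcs A C i → A b.1 = (i, b.2) :=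
    fun h => (mem_selectedArcs.1 h).2.1
  rw [witness, if_neg hbj] at hx
  by_cases hcond : (j, σ) ∈ G.selectedArcs A C i ∧ (b.1, (A b.1).2) ∈ G.selectedArcs A C i
  · rw [if_pos hcond] at hx
    have halive : x b.1 = G.liveLevel A b.1 - 1 ∨ x b.1 = G.liveLevel A b.1 := by
      split_ifs at hx <;> omega
    by_cases hbS : b ∈ G.selectedArcs A C i
    · rw [← hlive_of_mem hbS, bit_live_iff halive]
      simp only [hcond.1, hbS, and_self, iff_true]
      split_ifs at hx <;> simp_all
    · have hne : (i, b.2) ≠ A b.1 := fun h => hbS (by rw [← h] at hcond; exact hcond.2)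
      simp only [hbS, and_false, iff_false]
      exact not_bit_of_ne_live (hA.mem_outArcs hout) hout hne halive
  · rw [if_neg hcond] at hx
    refine iff_of_false (not_bit_of_eq_negOutdeg hout hx) fun ⟨hjS, hbS⟩ => hcond ⟨hjS, ?_⟩
    rwa [hlive_of_mem hbS]

lemma IsLiveChoice.liveGate_witness_iff (hA : G.IsLiveChoice A) {i j : V} {σ : Bool}
    {x : V → ℤ} (ha : (j, σ) ∈ G.inArcs i)
    (hxj : x j = G.level A j (i, σ) - 1 ∨ x j = G.level A j (i, σ))
    (hx : ∀ p, p ≠ j → x p = G.witness A C i j σ p) :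
    G.liveGate A C x i ↔ G.bit A x j (i, σ) := by
  have hout : (i, σ) ∈ G.outArcs j := mem_inArcs_iff_mem_outArcs.1 ha
  have hother : ∀ b ∈ G.inArcs i, b.1 ≠ j →
      (G.bit A x b.1 (i, b.2) ↔ (j, σ) ∈ G.selectedArcs A C i ∧ b ∈ G.selectedArcs A C i) :=
    fun b hb hbj => hA.bit_witness_iff hb hbj (hx b.1 hbj)
  have hpartner : ∀ b ∈ G.inArcs i, b.1 = j → b ≠ (j, σ) → ¬ G.bit A x b.1 (i, b.2) := by
    intro b hb hbj hne
    rw [hbj]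
    refine not_bit_of_sign_ne hout (hbj ▸ mem_inArcs_iff_mem_outArcs.1 hb) (fun h2 => hne ?_) hxj
    exact Prod.ext hbj h2
  by_cases hjS : (j, σ) ∈ G.selectedArcs A C i
  · refine andOrGate_iff_of_mem hjS (fun b hb hne => ?_) (fun b hb hbS => ?_)
    · have hbj : b.1 ≠ j := fun hbj => hne (by
        have h1 := (mem_selectedArcs.1 hb).2.1
        have h2 := (mem_selectedArcs.1 hjS).2.1
        rw [hbj] at h1
        exact Prod.ext hbj (Prod.ext_iff.1 (h1.symm.trans h2)).2)
      exact (hother b (selectedArcs_subset_inArcs hb) hbj).2 ⟨hjS, hb⟩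
    · by_cases hbj : b.1 = j
      · exact hpartner b hb hbj fun h => hbS (h ▸ hjS)
      · exact fun h => hbS ((hother b hb hbj).1 h).2
  · refine andOrGate_iff_of_not_mem selectedArcs_subset_inArcs ha hjS fun b hb hne => ?_
    by_cases hbj : b.1 = j
    · exact hpartner b hb hbj hne
    · exact fun h => hjS ((hother b hb hbj).1 h).1

lemma IsLiveChoice.exists_witness [DecidableEq V] (hA : G.IsLiveChoice A) {i j : V} {σ : Bool}
    (ha : (j, σ) ∈ G.inArcs i) :
    ∃ x : V → ℤ, (∀ p, x p ∈ G.stateSpace p) ∧ x j + 1 ∈ G.stateSpace j ∧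
      (G.liveGate A C x i ↔ σ = false) ∧
      (G.liveGate A C (Function.update x j (x j + 1)) i ↔ σ = true) := by
  set x := G.witness A C i j σ
  have hxj : x j = G.level A j (i, σ) - 1 := by simp [x, witness]
  have hx'j : Function.update x j (x j + 1) j = G.level A j (i, σ) := by simp [hxj]
  refine ⟨x, hA.witness_mem ha, ?_, ?_, ?_⟩
  · have hout : (i, σ) ∈ G.outArcs j := mem_inArcs_iff_mem_outArcs.1 ha
    have := one_le_level (A := A) hout
    have := level_le_outdeg (A := A) hout
    rw [hxj, mem_stateSpace]
    constructor <;> push_cast <;> omega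
  · rw [hA.liveGate_witness_iff ha (.inl hxj) fun p _ => rfl, bit_iff_of_eq_level_sub_one hxj]
  · rw [hA.liveGate_witness_iff ha (.inr hx'j) fun p hp => Function.update_of_ne hp _ _,
      bit_iff_of_eq_level hx'j]

end Realization

section FixedPoints

variable {V : Type} [Fintype V] {G : SDigraph V} {A : V → V × Bool} {C : Set V} {x : V → ℤ}

lemma eq_liveLevel_or_of_liveMap_eq (hfix : G.liveMap A C x = x) (i : V) :
    x i = G.liveLevel A i - 1 ∨ x i = G.liveLevel A i := by
  rw [← congrFun hfix i, liveMap]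
  split_ifs <;> simp

lemma eq_liveLevel_iff_of_liveMap_eq (hfix : G.liveMap A C x = x) (i : V) :
    x i = G.liveLevel A i ↔ G.liveGate A C x i := by
  conv_lhs => rw [← congrFun hfix i, liveMap]
  split_ifs with h <;> simp [h]

lemma bit_iff_of_liveMap_eq (hfix : G.liveMap A C x = x) {i : V} {b : V × Bool}
    (hlive : A b.1 = (i, b.2)) :
    G.bit A x b.1 (i, b.2) ↔ (x b.1 = G.liveLevel A b.1 ↔ b.2 = true) := by
  rw [← hlive, bit_live_iff (eq_liveLevel_or_of_liveMap_eq hfix b.1), hlive]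

lemma IsLiveChoice.bits_of_liveMap_eq (hA : G.IsLiveChoice A) (hfix : G.liveMap A C x = x)
    {i : V} (hi : ReachesAlong A C i)
    (ih : ∀ b ∈ G.inArcs i, A b.1 = (i, b.2) → b.1 ∉ C →
      (x b.1 = G.liveLevel A b.1 ↔ G.forced A C b.1 = true)) :
    (∀ b ∈ G.selectedArcs A C i, b.1 ∉ C → G.bit A x b.1 (i, b.2)) ∧
      ∀ b ∈ G.inArcs i, b ∉ G.selectedArcs A C i → ¬ G.bit A x b.1 (i, b.2) := by
  have hforced : ∀ b ∈ G.inArcs i, A b.1 = (i, b.2) → b.1 ∉ C →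
      (G.bit A x b.1 (i, b.2) ↔ G.forced A C b.1 = b.2) := fun b hb hlive hbC => by
    rw [bit_iff_of_liveMap_eq hfix hlive, ih b hb hlive hbC, ← Bool.eq_iff_iff]
  refine ⟨fun b hb hbC => ?_, fun b hb hbS => ?_⟩
  · obtain ⟨hbin, hlive, hcase⟩ := mem_selectedArcs.1 hb
    exact (hforced b hbin hlive hbC).2 (hcase.resolve_left hbC).2
  · by_cases hlive : A b.1 = (i, b.2)
    · have hbC : b.1 ∉ C := fun hbC => hbS (mem_selectedArcs.2 ⟨hb, hlive, .inl hbC⟩)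
      have hreach : ReachesAlong A C b.1 := ReachesAlong.of_next (by rwa [hlive])
      rw [hforced b hb hlive hbC]
      exact fun hf => hbS (mem_selectedArcs.2 ⟨hb, hlive, .inr ⟨hreach, hf⟩⟩)
    · have hout := mem_inArcs_iff_mem_outArcs.1 hb
      exact not_bit_of_ne_live (hA.mem_outArcs hout) hout (Ne.symm hlive)
        (eq_liveLevel_or_of_liveMap_eq hfix b.1)

lemma IsLiveChoice.eq_liveLevel_iff_forced (hA : G.IsLiveChoice A)
    (hC : ∀ w ∈ C, (A w).1 ∈ C) (hfix : G.liveMap A C x = x) (u : V) (hu : ReachesAlong A C u)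
    (huC : u ∉ C) : x u = G.liveLevel A u ↔ G.forced A C u = true := by
  induction hμ : univ.sup (depth A C) - depth A C u using Nat.strong_induction_on
    generalizing u with
  | _ μ ih =>
  have ih' : ∀ b ∈ G.inArcs u, A b.1 = (u, b.2) → b.1 ∉ C →
      (x b.1 = G.liveLevel A b.1 ↔ G.forced A C b.1 = true) := by
    intro b _ hlive hbC
    have hreach : ReachesAlong A C b.1 := ReachesAlong.of_next (by rwa [hlive])
    have hdepth := (hreach.next_and_depth_eq hbC).2
    have := le_sup (f := depth A C) (mem_univ b.1)
    rw [hlive] at hdepth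
    dsimp only at hdepth
    exact ih _ (by omega) b.1 hreach hbC rfl
  obtain ⟨hon, hoff⟩ := hA.bits_of_liveMap_eq hfix hu ih'
  have hsel : ∀ b ∈ G.selectedArcs A C u, b.1 ∉ C := fun b hb hbC =>
    huC (by simpa [(mem_selectedArcs.1 hb).2.1] using hC b.1 hbC)
  rw [eq_liveLevel_iff_of_liveMap_eq hfix,
    liveGate, andOrGate_iff_nonempty (fun b hb => hon b hb (hsel b hb)) hoff, forced_eq_true_iff]
  constructor
  · rintro ⟨b, hb⟩
    obtain ⟨hbin, hlive, hcase⟩ := mem_selectedArcs.1 hb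
    exact ⟨b, hbin, hlive, hsel b hb, hcase.resolve_left (hsel b hb)⟩
  · rintro ⟨b, hbin, hlive, hbC, hreach, hf⟩
    exact ⟨b, mem_selectedArcs.2 ⟨hbin, hlive, .inr ⟨hreach, hf⟩⟩⟩

end FixedPoints

section Cycle

variable {V : Type} [Fintype V] {G : SDigraph V} {m : ℕ} {v : Fin (m + 1) → V}
  {s : Fin (m + 1) → Bool}

variable (G v s) in
/-- The dummy arc of a sink is positive, so that its `liveLevel` is `1`. -/
noncomputable def liveArc (j : V) : V × Bool :=
  if h : ∃ t, v t = j then (v (h.choose + 1), s h.choose)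
  else if h : (G.outArcs j).Nonempty then h.choose else (j, true)

lemma liveArc_apply (hv : Function.Injective v) (t : Fin (m + 1)) :
    G.liveArc v s (v t) = (v (t + 1), s t) := by
  have h : ∃ t', v t' = v t := ⟨t, rfl⟩
  rw [liveArc, dif_pos h, hv h.choose_spec]

lemma isLiveChoice_liveArc (hv : Function.Injective v)
    (harc : ∀ t, G.SignedArc (v t) (v (t + 1)) (s t)) : G.IsLiveChoice (G.liveArc v s) := by
  intro j
  by_cases hj : ∃ t, v t = j
  · obtain ⟨t, rfl⟩ := hj
    exact .inl (by rw [liveArc_apply hv]; exact mem_outArcs.2 (harc t))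
  · rw [liveArc, dif_neg hj]
    split_ifs with h
    · exact .inl h.choose_spec
    · exact .inr ⟨rfl, by rw [outdeg_eq_card_outArcs, not_nonempty_iff_eq_empty.1 h, card_empty]⟩

variable {A : V → V × Bool} {x : V → ℤ}

lemma IsLiveChoice.cycle_step (hA : G.IsLiveChoice A) (hv : Function.Injective v)
    (hcyc : ∀ t, A (v t) = (v (t + 1), s t)) (harc : ∀ t, G.SignedArc (v t) (v (t + 1)) (s t))
    (hfix : G.liveMap A (Set.range v) x = x) (t : Fin (m + 1)) :
    x (v (t + 1)) = G.liveLevel A (v (t + 1)) ↔ (x (v t) = G.liveLevel A (v t) ↔ s t = true) := by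
  have hC : ∀ w ∈ Set.range v, (A w).1 ∈ Set.range v := by
    rintro _ ⟨r, rfl⟩
    exact ⟨r + 1, by rw [hcyc]⟩
  have hreach : ReachesAlong A (Set.range v) (v (t + 1)) := .of_mem ⟨_, rfl⟩
  obtain ⟨hon, hoff⟩ := hA.bits_of_liveMap_eq hfix hreach fun b _ hlive hbC =>
    hA.eq_liveLevel_iff_forced hC hfix b.1 (.of_next (by rwa [hlive])) hbC
  have hmem : (v t, s t) ∈ G.selectedArcs A (Set.range v) (v (t + 1)) :=
    mem_selectedArcs.2 ⟨mem_inArcs.2 (harc t), hcyc t, .inl ⟨t, rfl⟩⟩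
  rw [eq_liveLevel_iff_of_liveMap_eq hfix,
    liveGate, andOrGate_iff_of_mem hmem (fun b hb hne => hon b hb ?_) hoff]
  · exact bit_iff_of_liveMap_eq hfix (hcyc t)
  · rintro ⟨r, hr⟩
    have hlive := (mem_selectedArcs.1 hb).2.1
    rw [← hr, hcyc] at hlive
    obtain rfl : r = t := add_right_cancel (hv (Prod.ext_iff.1 hlive).1)
    exact hne (Prod.ext hr.symm (Prod.ext_iff.1 hlive).2.symm)

lemma IsLiveChoice.liveMap_ne_self (hA : G.IsLiveChoice A) (hv : Function.Injective v)
    (hcyc : ∀ t, A (v t) = (v (t + 1), s t)) (harc : ∀ t, G.SignedArc (v t) (v (t + 1)) (s t))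
    (hodd : negCount s % 2 = 1) : G.liveMap A (Set.range v) x ≠ x := fun hfix => by
  have := negCount_mod_two_eq_zero_of_cyclic
    (P := fun t => x (v t) = G.liveLevel A (v t)) (hA.cycle_step hv hcyc harc hfix)
  omega

end Cycle

section Assembly

variable {V : Type} [Fintype V] {G : SDigraph V} {A : V → V × Bool}

theorem IsLiveChoice.liveFDS_onGraph [DecidableEq V] (hA : G.IsLiveChoice A) (C : Set V) :
    (hA.liveFDS C).onGraph G := by
  refine ⟨fun j i => ⟨fun h => ?_, fun ⟨_, _, _, hlt⟩ => signedArc_of_liveMap_lt_update hlt⟩,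
    fun j i => ⟨fun h => ?_, fun ⟨_, _, _, hlt⟩ => signedArc_of_liveMap_update_lt hlt⟩⟩
  · obtain ⟨x, hx, hxj, h0, h1⟩ := hA.exists_witness (C := C) (σ := true) (mem_inArcs.2 h)
    exact ⟨x, hx, hxj, liveMap_lt_liveMap_iff.2 ⟨by simpa using h0, by simpa using h1⟩⟩
  · obtain ⟨x, hx, hxj, h0, h1⟩ := hA.exists_witness (C := C) (σ := false) (mem_inArcs.2 h)
    exact ⟨x, hx, hxj, liveMap_lt_liveMap_iff.2 ⟨by simpa using h1, by simpa using h0⟩⟩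

theorem IsLiveChoice.liveFDS_degreeBounded (hA : G.IsLiveChoice A) (C : Set V)
    (hdeg : ∀ i, 0 < G.outdeg i ∨ 0 < G.indeg i) : (hA.liveFDS C).degreeBounded G := by
  intro i
  have hcard : (G.stateSpace i).card = max 1 (G.outdeg i) + 1 := by
    simp only [stateSpace, Int.card_Icc]
    omega
  refine ⟨fun ⟨h0, _⟩ => ?_, fun hne => ?_⟩ <;> simp only [IsLiveChoice.liveFDS, hcard]
  · omega
  · have := hdeg i
    omega

end Assembly

end SDigraph

/-- If `G` is connected and has a negative cycle, then some
degree-bounded FDS on `G` has no fixed point. -/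
theorem stmt3 (n : ℕ) (G : SDigraph (Fin n)) (hconn : SDigraph.Connected G)
    (hneg : SDigraph.HasNegativeCycle G) :
    ∃ F : FDS (Fin n), F.onGraph G ∧ F.degreeBounded G ∧ ∀ x, ¬ F.IsFixed x := by
  obtain ⟨m, v, s, ⟨hv, harc⟩, hodd⟩ := hneg
  have hA := SDigraph.isLiveChoice_liveArc hv harc
  refine ⟨hA.liveFDS (Set.range v), hA.liveFDS_onGraph _,
    hA.liveFDS_degreeBounded _ (hconn.outdeg_pos_or_indeg_pos (SDigraph.SignedArc.arc (harc 0))),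
    fun x hx => hA.liveMap_ne_self hv (SDigraph.liveArc_apply hv) harc hodd hx.2⟩
end
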